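/- arXiv:2101.04413 — 5 statements merged into one kernel-verified Lean document; each statement's English description precedes it below -/
import Mathlib

section
/- Let n ≥ 1, let B be an n×n real symmetric positive-definite matrix, and let s, y ∈ ℝⁿ with s ≠ 0 and sᵀ y > 0. Define the BFGS update B⁺ = B − (B s)(B s)ᵀ/(sᵀ B s) + y yᵀ/(sᵀ y). Then det(B⁺) = det(B) · (sᵀ y)/(sᵀ B s). -/
/-!
Write the update as `B + u₁ w₁ᵀ + u₂ w₂ᵀ` with `u₁ = B s`, `w₁ = -(sᵀ B s)⁻¹ B s`, `u₂ = y` and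
`w₂ = (sᵀ y)⁻¹ y`. The rank-two matrix determinant lemma gives `det B⁺ = det B · det M` for the
`2 × 2` matrix `M = I + (wᵢᵀ B⁻¹ uⱼ)`. Since `B` is symmetric, `(B s)ᵀ B⁻¹ x = sᵀ x`, so the first
diagonal entry of `M` vanishes and `det M` is minus the product of the off-diagonal entries,
`(sᵀ y)/(sᵀ B s)`.
-/

open scoped RealInnerProductSpace
open Matrix

namespace Matrix

variable {ι R : Type*} [CommRing R]

theorem vecMulVec_add_vecMulVec_eq_mul (u₁ u₂ w₁ w₂ : ι → R) :
    vecMulVec u₁ w₁ + vecMulVec u₂ w₂ = (of ![u₁, u₂])ᵀ * of ![w₁, w₂] := by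
  ext i j
  simp [vecMulVec_apply, mul_apply, Fin.sum_univ_two]

variable [Fintype ι] [DecidableEq ι]

theorem det_add_vecMulVec_add_vecMulVec {A : Matrix ι ι R} (hA : IsUnit A.det)
    (u₁ u₂ w₁ w₂ : ι → R) :
    (A + vecMulVec u₁ w₁ + vecMulVec u₂ w₂).det =
      A.det * ((1 + w₁ ⬝ᵥ A⁻¹ *ᵥ u₁) * (1 + w₂ ⬝ᵥ A⁻¹ *ᵥ u₂)
        - (w₁ ⬝ᵥ A⁻¹ *ᵥ u₂) * (w₂ ⬝ᵥ A⁻¹ *ᵥ u₁)) := by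
  have hentry (i j : Fin 2) : (of ![w₁, w₂] * A⁻¹ * (of ![u₁, u₂])ᵀ) i j =
      ![w₁, w₂] i ⬝ᵥ A⁻¹ *ᵥ ![u₁, u₂] j := by
    rw [Matrix.mul_assoc]
    simp only [mul_apply, mulVec, dotProduct, transpose_apply, of_apply]
  rw [add_assoc, vecMulVec_add_vecMulVec_eq_mul, det_add_mul _ _ hA, det_fin_two]
  simp only [add_apply, hentry, one_apply_eq, one_apply_ne (by decide : (0 : Fin 2) ≠ 1),
    one_apply_ne (by decide : (1 : Fin 2) ≠ 0)]
  simp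

theorem inv_mulVec_mulVec_self {A : Matrix ι ι R} (hA : IsUnit A.det) (x : ι → R) :
    A⁻¹ *ᵥ A *ᵥ x = x := by
  rw [mulVec_mulVec, nonsing_inv_mul A hA, one_mulVec]

theorem IsSymm.mulVec_dotProduct_inv_mulVec {A : Matrix ι ι R} (hsymm : A.IsSymm)
    (hA : IsUnit A.det) (x z : ι → R) : A *ᵥ x ⬝ᵥ A⁻¹ *ᵥ z = x ⬝ᵥ z := by
  rw [dotProduct_mulVec, ← vecMul_transpose, hsymm.eq, vecMul_vecMul, mul_nonsing_inv A hA,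
    vecMul_one]

end Matrix

section BFGS

variable {ι K : Type*} [Fintype ι] [Field K]

noncomputable def bfgsUpdate (B : Matrix ι ι K) (s y : ι → K) : Matrix ι ι K :=
  B - (s ⬝ᵥ B *ᵥ s)⁻¹ • vecMulVec (B *ᵥ s) (B *ᵥ s) + (s ⬝ᵥ y)⁻¹ • vecMulVec y y

theorem det_bfgsUpdate [DecidableEq ι] {B : Matrix ι ι K} (hsymm : B.IsSymm)
    (hB : IsUnit B.det) {s : ι → K} (hs : s ⬝ᵥ B *ᵥ s ≠ 0) (y : ι → K) :
    (bfgsUpdate B s y).det = B.det * (s ⬝ᵥ y / s ⬝ᵥ B *ᵥ s) := by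
  have hBs : B *ᵥ s ⬝ᵥ s = s ⬝ᵥ B *ᵥ s := dotProduct_comm _ _
  rw [bfgsUpdate, sub_eq_add_neg, ← neg_smul, ← vecMulVec_smul, ← vecMulVec_smul,
    det_add_vecMulVec_add_vecMulVec hB, smul_dotProduct, smul_dotProduct, smul_dotProduct,
    smul_dotProduct, inv_mulVec_mulVec_self hB, hsymm.mulVec_dotProduct_inv_mulVec hB, hBs,
    dotProduct_comm y s]
  simp only [smul_eq_mul]
  field_simp
  ring

end BFGS

theorem bfgs_det_update_general (n : ℕ)
    (B : Matrix (Fin n) (Fin n) ℝ) (hB : B.PosDef)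
    (s y : EuclideanSpace ℝ (Fin n))
    (hs : s ≠ 0)
    (Bplus : Matrix (Fin n) (Fin n) ℝ)
    (hBplus : Bplus =
      B - (⟪s, Matrix.toEuclideanLin B s⟫)⁻¹ •
            Matrix.vecMulVec (Matrix.toEuclideanLin B s) (Matrix.toEuclideanLin B s)
        + (⟪s, y⟫)⁻¹ • Matrix.vecMulVec y y) :
    Bplus.det = B.det * (⟪s, y⟫ / ⟪s, Matrix.toEuclideanLin B s⟫) := by
  have hinner (x z : EuclideanSpace ℝ (Fin n)) : ⟪x, z⟫ = x.ofLp ⬝ᵥ z.ofLp :=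
    dotProduct_comm _ _
  have hpos : 0 < s.ofLp ⬝ᵥ B *ᵥ s.ofLp := by
    simpa using hB.dotProduct_mulVec_pos (x := s.ofLp) (by simpa using hs)
  have hBplus' : Bplus = bfgsUpdate B s.ofLp y.ofLp := by
    rw [hBplus, hinner, hinner]
    rfl
  rw [hBplus', hinner, hinner]
  exact det_bfgsUpdate (isHermitian_iff_isSymm.mp hB.isHermitian)
    ((isUnit_iff_isUnit_det B).mp hB.isUnit) hpos.ne' y.ofLp

/-- **Determinant of the BFGS update.** For an `n × n` real symmetric positive-definite
matrix `B` and vectors `s, y ∈ ℝⁿ` with `s ≠ 0` and `sᵀ y > 0`, the BFGS update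
`B⁺ = B − (B s)(B s)ᵀ/(sᵀ B s) + y yᵀ/(sᵀ y)` satisfies
`det(B⁺) = det(B) · (sᵀ y)/(sᵀ B s)`. -/
theorem bfgs_det_update (n : ℕ) (hn : 1 ≤ n)
    (B : Matrix (Fin n) (Fin n) ℝ) (hB : B.PosDef)
    (s y : EuclideanSpace ℝ (Fin n))
    (hs : s ≠ 0) (hsy : 0 < ⟪s, y⟫)
    (Bplus : Matrix (Fin n) (Fin n) ℝ)
    (hBplus : Bplus =
      B - (⟪s, Matrix.toEuclideanLin B s⟫)⁻¹ •
            Matrix.vecMulVec (Matrix.toEuclideanLin B s) (Matrix.toEuclideanLin B s)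
        + (⟪s, y⟫)⁻¹ • Matrix.vecMulVec y y) :
    Bplus.det = B.det * (⟪s, y⟫ / ⟪s, Matrix.toEuclideanLin B s⟫) :=
  bfgs_det_update_general n B hB s y hs Bplus hBplus
end

section
/- Let n ≥ 1, let B be an n×n real symmetric positive-definite matrix, and let s, y ∈ ℝⁿ with s ≠ 0 and sᵀ y > 0. Then the BFGS update B⁺ = B − (B s)(B s)ᵀ/(sᵀ B s) + y yᵀ/(sᵀ y) is again symmetric positive definite. -/
/-!
By Cauchy–Schwarz for the inner product `⟨u, v⟩ = uᵀ B v`, the first two terms of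
`xᵀ B⁺ x = xᵀ B x − (sᵀ B x)² / (sᵀ B s) + (yᵀ x)² / (sᵀ y)` have nonnegative sum, which vanishes
only for `x` parallel to `s`; for such a nonzero `x` the last term is positive since `sᵀ y > 0`.
-/

open scoped RealInnerProductSpace

namespace Matrix

variable {ι R : Type*} [Fintype ι]

section CommRing

variable [CommRing R] {B : Matrix ι ι R}

theorem IsSymm.dotProduct_mulVec_comm (hB : B.IsSymm) (u v : ι → R) :
    u ⬝ᵥ B *ᵥ v = v ⬝ᵥ B *ᵥ u := by
  rw [dotProduct_mulVec, ← mulVec_transpose, hB.eq, dotProduct_comm]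

theorem IsSymm.mul_dotProduct_mulVec_sub_smul_self (hB : B.IsSymm) {s x : ι → R} {c : R}
    (hc : c * (s ⬝ᵥ B *ᵥ s) = s ⬝ᵥ B *ᵥ x) :
    (s ⬝ᵥ B *ᵥ s) * ((x - c • s) ⬝ᵥ B *ᵥ (x - c • s)) =
      (s ⬝ᵥ B *ᵥ s) * (x ⬝ᵥ B *ᵥ x) - (s ⬝ᵥ B *ᵥ x) ^ 2 := by
  simp only [mulVec_sub, mulVec_smul, dotProduct_sub, sub_dotProduct, dotProduct_smul,
    smul_dotProduct, smul_eq_mul, hB.dotProduct_mulVec_comm x s]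
  linear_combination (c * (s ⬝ᵥ B *ᵥ s) - s ⬝ᵥ B *ᵥ x) * hc

theorem PosDef.dotProduct_mulVec_self_pos [PartialOrder R] [StarRing R] [TrivialStar R]
    (hB : B.PosDef) {x : ι → R} (hx : x ≠ 0) : 0 < x ⬝ᵥ B *ᵥ x := by
  simpa using hB.dotProduct_mulVec_pos hx

end CommRing

section Field

variable [Field R] {B : Matrix ι ι R}

def bfgsUpdate (B : Matrix ι ι R) (s y : ι → R) : Matrix ι ι R :=
  B - (s ⬝ᵥ B *ᵥ s)⁻¹ • vecMulVec (B *ᵥ s) (B *ᵥ s) + (s ⬝ᵥ y)⁻¹ • vecMulVec y y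

theorem IsSymm.bfgsUpdate (hB : B.IsSymm) (s y : ι → R) : (B.bfgsUpdate s y).IsSymm :=
  (hB.sub (IsSymm.smul (transpose_vecMulVec _ _) _)).add (IsSymm.smul (transpose_vecMulVec _ _) _)

theorem IsSymm.dotProduct_bfgsUpdate_mulVec (hB : B.IsSymm) (s y x : ι → R) :
    x ⬝ᵥ B.bfgsUpdate s y *ᵥ x =
      x ⬝ᵥ B *ᵥ x - (s ⬝ᵥ B *ᵥ x) ^ 2 / (s ⬝ᵥ B *ᵥ s) + (y ⬝ᵥ x) ^ 2 / (s ⬝ᵥ y) := by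
  simp only [Matrix.bfgsUpdate, add_mulVec, sub_mulVec, smul_mulVec, vecMulVec_mulVec,
    op_smul_eq_smul, dotProduct_add, dotProduct_sub, dotProduct_smul, smul_eq_mul,
    dotProduct_comm x y]
  rw [dotProduct_comm (B *ᵥ s) x, hB.dotProduct_mulVec_comm x s]
  ring

end Field

section OrderedField

variable [Field R] [LinearOrder R] [IsStrictOrderedRing R] [StarRing R] [TrivialStar R]
  {B : Matrix ι ι R}

theorem PosDef.sq_dotProduct_mulVec_le (hB : B.PosDef) (s x : ι → R) :
    (s ⬝ᵥ B *ᵥ x) ^ 2 ≤ (s ⬝ᵥ B *ᵥ s) * (x ⬝ᵥ B *ᵥ x) := by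
  obtain rfl | hs := eq_or_ne s 0
  · simp
  have ha := hB.dotProduct_mulVec_self_pos hs
  set c := (s ⬝ᵥ B *ᵥ x) / (s ⬝ᵥ B *ᵥ s)
  have hw := (isHermitian_iff_isSymm.mp hB.1).mul_dotProduct_mulVec_sub_smul_self
    (div_mul_cancel₀ (s ⬝ᵥ B *ᵥ x) ha.ne')
  have hw₀ : 0 ≤ (x - c • s) ⬝ᵥ B *ᵥ (x - c • s) := by
    simpa using hB.posSemidef.dotProduct_mulVec_nonneg (x - c • s)
  nlinarith

theorem PosDef.sq_dotProduct_mulVec_lt (hB : B.PosDef) {s x : ι → R} (hs : s ≠ 0)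
    (hx : ∀ c : R, x ≠ c • s) :
    (s ⬝ᵥ B *ᵥ x) ^ 2 < (s ⬝ᵥ B *ᵥ s) * (x ⬝ᵥ B *ᵥ x) := by
  have ha := hB.dotProduct_mulVec_self_pos hs
  set c := (s ⬝ᵥ B *ᵥ x) / (s ⬝ᵥ B *ᵥ s)
  have hw := (isHermitian_iff_isSymm.mp hB.1).mul_dotProduct_mulVec_sub_smul_self
    (div_mul_cancel₀ (s ⬝ᵥ B *ᵥ x) ha.ne')
  have hw_pos := mul_pos ha (hB.dotProduct_mulVec_self_pos (sub_ne_zero.mpr (hx c)))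
  linarith

theorem PosDef.bfgsUpdate (hB : B.PosDef) {s y : ι → R} (hsy : 0 < s ⬝ᵥ y) :
    (B.bfgsUpdate s y).PosDef := by
  have hB_symm : B.IsSymm := isHermitian_iff_isSymm.mp hB.1
  refine .of_dotProduct_mulVec_pos (isHermitian_iff_isSymm.mpr (hB_symm.bfgsUpdate s y))
    fun x hx => ?_
  have hs : s ≠ 0 := by rintro rfl; simp at hsy
  have ha := hB.dotProduct_mulVec_self_pos hs
  rw [star_trivial, hB_symm.dotProduct_bfgsUpdate_mulVec]
  obtain hyx | hyx := eq_or_ne (y ⬝ᵥ x) 0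
  · have hx_indep : ∀ c : R, x ≠ c • s := by
      rintro c rfl
      rw [dotProduct_smul, smul_eq_mul, dotProduct_comm, mul_eq_zero] at hyx
      exact hyx.elim (fun hc => hx (by simp [hc])) hsy.ne'
    have h_cs := (div_lt_iff₀' ha).mpr (hB.sq_dotProduct_mulVec_lt hs hx_indep)
    rw [hyx, zero_pow two_ne_zero, zero_div, add_zero]
    linarith
  · have h_cs := (div_le_iff₀' ha).mpr (hB.sq_dotProduct_mulVec_le s x)
    have h_y : 0 < (y ⬝ᵥ x) ^ 2 / (s ⬝ᵥ y) := by positivity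
    linarith

end OrderedField

end Matrix

theorem bfgs_posDef_update_general (n : ℕ)
    (B : Matrix (Fin n) (Fin n) ℝ) (hB : B.PosDef)
    (s y : EuclideanSpace ℝ (Fin n))
    (hsy : 0 < ⟪s, y⟫)
    (Bplus : Matrix (Fin n) (Fin n) ℝ)
    (hBplus : Bplus =
      B - (⟪s, Matrix.toEuclideanLin B s⟫)⁻¹ •
            Matrix.vecMulVec (Matrix.toEuclideanLin B s) (Matrix.toEuclideanLin B s)
        + (⟪s, y⟫)⁻¹ • Matrix.vecMulVec y y) :
    Bplus.PosDef := by
  simp only [EuclideanSpace.inner_eq_star_dotProduct, Matrix.toLpLin_apply, star_trivial,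
    dotProduct_comm _ s.ofLp] at hsy hBplus
  exact hBplus ▸ hB.bfgsUpdate hsy

/-- **Positive definiteness of the BFGS update.** For an `n × n` real symmetric
positive-definite matrix `B` and vectors `s, y ∈ ℝⁿ` with `s ≠ 0` and `sᵀ y > 0`,
the BFGS update `B⁺ = B − (B s)(B s)ᵀ/(sᵀ B s) + y yᵀ/(sᵀ y)` is again symmetric
positive definite. -/
theorem bfgs_posDef_update (n : ℕ) (hn : 1 ≤ n)
    (B : Matrix (Fin n) (Fin n) ℝ) (hB : B.PosDef)
    (s y : EuclideanSpace ℝ (Fin n))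
    (hs : s ≠ 0) (hsy : 0 < ⟪s, y⟫)
    (Bplus : Matrix (Fin n) (Fin n) ℝ)
    (hBplus : Bplus =
      B - (⟪s, Matrix.toEuclideanLin B s⟫)⁻¹ •
            Matrix.vecMulVec (Matrix.toEuclideanLin B s) (Matrix.toEuclideanLin B s)
        + (⟪s, y⟫)⁻¹ • Matrix.vecMulVec y y) :
    Bplus.PosDef :=
  bfgs_posDef_update_general n B hB s y hsy Bplus hBplus
end

section
/- Let s, y ∈ ℝⁿ and let M₂ > 0 and μ ≥ 0. Assume sᵀ y > 0 and ‖y‖² ≤ M₂ (sᵀ y). Define ŷ(μ) = y + μ s. Then sᵀ ŷ(μ) > 0 and ‖ŷ(μ)‖² / (sᵀ ŷ(μ)) ≤ M₂ + 2μ. -/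
open scoped RealInnerProductSpace

/-- For `s, y ∈ ℝⁿ`, `M₂ > 0`, `μ ≥ 0` with `sᵀ y > 0` and `‖y‖² ≤ M₂ (sᵀ y)`,
the regularized vector `ŷ(μ) = y + μ s` satisfies `sᵀ ŷ(μ) > 0` and
`‖ŷ(μ)‖²/(sᵀ ŷ(μ)) ≤ M₂ + 2μ`. -/
theorem regularized_curvature_ratio_bound (n : ℕ)
    (s y : EuclideanSpace ℝ (Fin n)) (M₂ μ : ℝ)
    (hM₂ : 0 < M₂) (hμ : 0 ≤ μ)
    (hsy : 0 < ⟪s, y⟫) (hy : ‖y‖ ^ 2 ≤ M₂ * ⟪s, y⟫)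
    (yhat : EuclideanSpace ℝ (Fin n)) (hyhat : yhat = y + μ • s) :
    0 < ⟪s, yhat⟫ ∧ ‖yhat‖ ^ 2 / ⟪s, yhat⟫ ≤ M₂ + 2 * μ := by
  have hs2 : 0 ≤ ‖s‖ ^ 2 := sq_nonneg _
  have hinner : ⟪s, yhat⟫ = ⟪s, y⟫ + μ * ‖s‖ ^ 2 := by
    rw [hyhat, inner_add_right, real_inner_smul_right, real_inner_self_eq_norm_sq]
  have hpos : 0 < ⟪s, yhat⟫ := by
    rw [hinner]; positivity
  refine ⟨hpos, ?_⟩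
  rw [div_le_iff₀ hpos]
  have hnorm : ‖yhat‖ ^ 2 = ‖y‖ ^ 2 + 2 * μ * ⟪s, y⟫ + μ ^ 2 * ‖s‖ ^ 2 := by
    rw [hyhat, norm_add_sq_real, real_inner_smul_right, norm_smul, real_inner_comm]
    simp [mul_pow, abs_of_nonneg hμ]
    ring
  rw [hnorm, hinner]
  nlinarith [mul_nonneg hμ hs2, mul_nonneg (mul_nonneg hμ hM₂.le) hs2,
    mul_nonneg (mul_nonneg hμ hμ) hs2]
end

section
/- Let n ≥ 1, and let M₃ ≥ 0, c ≥ 0, M₄ > 0, μ_min > 0. Suppose μ ≥ μ_min and B is an n×n real symmetric positive-definite matrix with tr(B) ≤ M₃ + c·μ and det(B) ≥ M₄·μⁿ. Then λ_max(B⁻¹) ≤ (1/M₄)·(M₃/μ_min + c)^{n−1} · (1/μ). -/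
open Matrix Finset

private lemma ring_inverse_eig {n : ℕ} {A : Matrix (Fin n) (Fin n) ℝ} (hA : A.PosDef) :
    Ring.inverse (RCLike.ofReal ∘ hA.1.eigenvalues : Fin n → ℝ)
      = fun i => (hA.1.eigenvalues i)⁻¹ := by
  have hne : ∀ i, hA.1.eigenvalues i ≠ 0 := fun i => (hA.eigenvalues_pos i).ne'
  let u : (Fin n → ℝ)ˣ :=
    ⟨(RCLike.ofReal ∘ hA.1.eigenvalues : Fin n → ℝ), fun i => (hA.1.eigenvalues i)⁻¹,
      by funext i; simp [mul_inv_cancel₀ (hne i)],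
      by funext i; simp [inv_mul_cancel₀ (hne i)]⟩
  exact Ring.inverse_unit u

private lemma trace_inv_eq_sum_inv_eigenvalues {n : ℕ} {A : Matrix (Fin n) (Fin n) ℝ}
    (hA : A.PosDef) : A⁻¹.trace = ∑ i, (hA.1.eigenvalues i)⁻¹ := by
  set U : Matrix (Fin n) (Fin n) ℝ := (hA.1.eigenvectorUnitary : Matrix (Fin n) (Fin n) ℝ)
    with hUdef
  have hU : U * star U = 1 := (Matrix.mem_unitaryGroup_iff).mp hA.1.eigenvectorUnitary.2
  have hU' : star U * U = 1 := (Matrix.mem_unitaryGroup_iff').mp hA.1.eigenvectorUnitary.2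
  have hUinv : U⁻¹ = star U := Matrix.inv_eq_right_inv hU
  have hsUinv : (star U)⁻¹ = U := Matrix.inv_eq_right_inv hU'
  have h : A⁻¹ = (U * diagonal (RCLike.ofReal ∘ hA.1.eigenvalues) * star U)⁻¹ :=
    congrArg Inv.inv hA.1.spectral_theorem
  rw [Matrix.mul_inv_rev, Matrix.mul_inv_rev, hUinv, hsUinv] at h
  rw [h, Matrix.inv_diagonal, ← mul_assoc, trace_mul_cycle, hU', one_mul, trace_diagonal,
    ring_inverse_eig hA]

/-- If `B` is an `n × n` real symmetric positive-definite matrix with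
`tr(B) ≤ M₃ + c μ` and `det(B) ≥ M₄ μⁿ`, where `μ ≥ μ_min > 0`, then
`λ_max(B⁻¹) ≤ (1/M₄) (M₃/μ_min + c)^{n−1} (1/μ)`, stated as: every eigenvalue of `B⁻¹`
is at most this bound. -/
theorem inv_maxEigenvalue_bound_regularized (n : ℕ) (hn : 1 ≤ n)
    (M₃ c M₄ μmin μ : ℝ) (hM₃ : 0 ≤ M₃) (hc : 0 ≤ c) (hM₄ : 0 < M₄)
    (hμmin : 0 < μmin) (hμ : μmin ≤ μ)
    (B : Matrix (Fin n) (Fin n) ℝ) (hB : B.PosDef)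
    (htr : B.trace ≤ M₃ + c * μ) (hdet : M₄ * μ ^ n ≤ B.det) :
    ∀ i : Fin n, (hB.inv.1.eigenvalues i : ℝ) ≤
      (1 / M₄) * (M₃ / μmin + c) ^ (n - 1) * (1 / μ) := by
  intro i
  have hμpos : 0 < μ := lt_of_lt_of_le hμmin hμ
  set ν : Fin n → ℝ := hB.inv.1.eigenvalues with hν
  have hνpos : ∀ j, 0 < ν j := fun j => hB.inv.eigenvalues_pos j
  -- product of eigenvalues of B⁻¹
  have hprod : ∏ j, ν j = (B.det)⁻¹ := by
    have h1 : (B⁻¹).det = ∏ j, (ν j : ℝ) := hB.inv.1.det_eq_prod_eigenvalues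
    rw [Matrix.det_nonsing_inv, Ring.inverse_eq_inv'] at h1
    exact h1.symm
  -- sum of reciprocals of eigenvalues of B⁻¹ equals trace of B
  have hBinvinv : (B⁻¹)⁻¹ = B :=
    Matrix.nonsing_inv_nonsing_inv B (isUnit_iff_ne_zero.mpr hB.det_pos.ne')
  have hsum : ∑ j, (ν j)⁻¹ = B.trace := by
    have := trace_inv_eq_sum_inv_eigenvalues hB.inv
    rwa [hBinvinv, eq_comm] at this
  -- each reciprocal eigenvalue is at most the trace of B
  have hrec : ∀ j, (ν j)⁻¹ ≤ M₃ + c * μ := by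
    intro j
    calc (ν j)⁻¹ ≤ ∑ k, (ν k)⁻¹ :=
          Finset.single_le_sum (fun k _ => (inv_pos.mpr (hνpos k)).le) (mem_univ j)
      _ = B.trace := hsum
      _ ≤ M₃ + c * μ := htr
  -- trace bound refinement
  have hμbound : M₃ + c * μ ≤ (M₃ / μmin + c) * μ := by
    have h1 : M₃ ≤ M₃ / μmin * μ := by
      rw [div_mul_eq_mul_div, le_div_iff₀ hμmin]
      exact mul_le_mul_of_nonneg_left hμ hM₃
    nlinarith
  have hMc : 0 ≤ M₃ + c * μ := by positivity
  -- key decomposition: ν i = (∏ ν) * ∏_{j ≠ i} (ν j)⁻¹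
  have hone : (∏ j ∈ univ.erase i, ν j) * ∏ j ∈ univ.erase i, (ν j)⁻¹ = 1 := by
    rw [← Finset.prod_mul_distrib]
    exact Finset.prod_eq_one fun j _ => mul_inv_cancel₀ (hνpos j).ne'
  have hkey : ν i = (∏ j, ν j) * ∏ j ∈ univ.erase i, (ν j)⁻¹ := by
    rw [← Finset.mul_prod_erase univ ν (mem_univ i), mul_assoc, hone, mul_one]
  have hcard : (univ.erase i).card = n - 1 := by
    rw [Finset.card_erase_of_mem (mem_univ i), Finset.card_univ, Fintype.card_fin]
  have hprodle : ∏ j ∈ univ.erase i, (ν j)⁻¹ ≤ ((M₃ / μmin + c) * μ) ^ (n - 1) := by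
    calc ∏ j ∈ univ.erase i, (ν j)⁻¹ ≤ ∏ _j ∈ univ.erase i, ((M₃ / μmin + c) * μ) :=
          Finset.prod_le_prod (fun j _ => (inv_pos.mpr (hνpos j)).le)
            (fun j _ => le_trans (hrec j) hμbound)
      _ = ((M₃ / μmin + c) * μ) ^ (n - 1) := by rw [Finset.prod_const, hcard]
  have hdetinv : (B.det)⁻¹ ≤ (M₄ * μ ^ n)⁻¹ :=
    inv_anti₀ (by positivity) hdet
  have hfinal : ν i ≤ (M₄ * μ ^ n)⁻¹ * ((M₃ / μmin + c) * μ) ^ (n - 1) := by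
    rw [hkey, hprod]
    apply mul_le_mul hdetinv hprodle (Finset.prod_nonneg fun j _ => (inv_pos.mpr (hνpos j)).le)
      (by positivity)
  refine hfinal.trans (le_of_eq ?_)
  have hμn : μ ^ n = μ ^ (n - 1) * μ := by
    rw [← pow_succ, Nat.sub_add_cancel hn]
  rw [mul_pow, hμn]
  field_simp
end

section
/- Let n ≥ 1 and let f : ℝⁿ → ℝ be differentiable with gradient ∇f. Let x ∈ ℝⁿ, let H be an n×n real symmetric positive-definite matrix, and set d = −H ∇f(x). Let L_g > 0 be such that ‖∇f(x + τ d) − ∇f(x)‖ ≤ L_g τ ‖d‖ for all τ ∈ [0,1]. Let 0 < η₁ < 1 and define the model value q = f(x) + ∇f(x)ᵀ d + (1/2) dᵀ H⁻¹ d. Then f(x) − f(x + d) − η₁ (f(x) − q) ≥ (1/2)((2 − η₁) λ_min(H⁻¹) − L_g) ‖d‖². -/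
open scoped RealInnerProductSpace

/-!
Comparing `t ↦ f (x + t • d)` with its quadratic upper model on `[0, 1]` gives the descent
inequality `f (x + d) ≤ f x + ⟪∇f x, d⟫ + (L_g / 2) ‖d‖²`. Since `H⁻¹ d = -∇f x`, both
`-⟪∇f x, d⟫` and `2 (f x - q)` equal `s = dᵀ H⁻¹ d`, so the left-hand side is at least
`(1 - η₁ / 2) s - (L_g / 2) ‖d‖²`; as `1 - η₁ / 2 ≥ 0`, the Rayleigh bound
`s ≥ λ_min(H⁻¹) ‖d‖²` finishes.
-/

theorem LinearMap.IsSymmetric.mul_norm_sq_le_inner_apply {E : Type*} [NormedAddCommGroup E]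
    [InnerProductSpace ℝ E] [FiniteDimensional ℝ E] {T : E →ₗ[ℝ] E} (hT : T.IsSymmetric)
    {n : ℕ} (hn : Module.finrank ℝ E = n) {m : ℝ} (hm : ∀ i, m ≤ hT.eigenvalues hn i) (v : E) :
    m * ‖v‖ ^ 2 ≤ ⟪v, T v⟫ := by
  set b := hT.eigenvectorBasis hn
  have hnorm : ‖v‖ ^ 2 = ∑ i, b.repr v i ^ 2 := by
    rw [← b.repr.norm_map v, EuclideanSpace.norm_sq_eq]
    simp only [Real.norm_eq_abs, sq_abs]
  have hinner : ⟪v, T v⟫ = ∑ i, hT.eigenvalues hn i * b.repr v i ^ 2 := by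
    rw [← b.repr.inner_map_map, EuclideanSpace.inner_eq_star_dotProduct]
    simp [dotProduct, b, hT.eigenvectorBasis_apply_self_apply, sq, mul_assoc]
  rw [hnorm, hinner, Finset.mul_sum]
  gcongr with i
  exact hm i

theorem Matrix.IsHermitian.mul_norm_sq_le_inner_toEuclideanLin {n : Type*} [Fintype n]
    [DecidableEq n] {A : Matrix n n ℝ} (hA : A.IsHermitian) {m : ℝ}
    (hm : ∀ i, m ≤ hA.eigenvalues i) (v : EuclideanSpace ℝ n) :
    m * ‖v‖ ^ 2 ≤ ⟪v, Matrix.toEuclideanLin A v⟫ :=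
  (Matrix.isSymmetric_toEuclideanLin_iff.mpr hA).mul_norm_sq_le_inner_apply
    finrank_euclideanSpace (fun j => by
      simpa [Matrix.IsHermitian.eigenvalues, Matrix.IsHermitian.eigenvalues₀] using
        hm (Fintype.equivOfCardEq (Fintype.card_fin _) j)) v

theorem Matrix.toEuclideanLin_inv_apply_toEuclideanLin {𝕜 n : Type*} [RCLike 𝕜] [Fintype n]
    [DecidableEq n] {A : Matrix n n 𝕜} (hA : IsUnit A.det) (v : EuclideanSpace 𝕜 n) :
    Matrix.toEuclideanLin A⁻¹ (Matrix.toEuclideanLin A v) = v := by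
  simp [Matrix.toLpLin_apply, Matrix.mulVec_mulVec, Matrix.nonsing_inv_mul A hA]

section Descent

variable {E : Type*} [NormedAddCommGroup E] [InnerProductSpace ℝ E] [CompleteSpace E]

theorem HasGradientAt.hasDerivAt_comp_add_smul {f : E → ℝ} {x d g : E} {t : ℝ}
    (hf : HasGradientAt f g (x + t • d)) :
    HasDerivAt (fun s : ℝ => f (x + s • d)) ⟪g, d⟫ t := by
  have hline : HasDerivAt (fun s : ℝ => x + s • d) d t := by
    simpa using ((hasDerivAt_id t).smul_const d).const_add x
  simpa [Function.comp_def] using hf.hasFDerivAt.comp_hasDerivAt t hline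

theorem Differentiable.apply_add_le_of_norm_gradient_sub_le {f : E → ℝ} (hf : Differentiable ℝ f)
    {x d : E} {L : ℝ}
    (hL : ∀ τ ∈ Set.Icc (0 : ℝ) 1, ‖gradient f (x + τ • d) - gradient f x‖ ≤ L * τ * ‖d‖) :
    f (x + d) ≤ f x + ⟪gradient f x, d⟫ + L / 2 * ‖d‖ ^ 2 := by
  set g := gradient f x
  have hφ (t : ℝ) : HasDerivAt (fun s : ℝ => f (x + s • d)) ⟪gradient f (x + t • d), d⟫ t :=
    (hf _).hasGradientAt.hasDerivAt_comp_add_smul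
  have hB (t : ℝ) : HasDerivAt (fun s : ℝ => f x + s * ⟪g, d⟫ + L / 2 * s ^ 2 * ‖d‖ ^ 2)
      (⟪g, d⟫ + L * t * ‖d‖ ^ 2) t := by
    have := (((hasDerivAt_id t).mul_const ⟪g, d⟫).const_add (f x)).add
      (((hasDerivAt_pow 2 t).const_mul (L / 2)).mul_const (‖d‖ ^ 2))
    refine this.congr_deriv ?_
    simp only [Nat.cast_ofNat, Nat.add_one_sub_one, pow_one]
    ring
  have hderiv_le : ∀ t ∈ Set.Ico (0 : ℝ) 1,
      ⟪gradient f (x + t • d), d⟫ ≤ ⟪g, d⟫ + L * t * ‖d‖ ^ 2 := by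
    intro t ht
    calc ⟪gradient f (x + t • d), d⟫ = ⟪g, d⟫ + ⟪gradient f (x + t • d) - g, d⟫ := by
          rw [inner_sub_left]; ring
      _ ≤ ⟪g, d⟫ + ‖gradient f (x + t • d) - g‖ * ‖d‖ := by gcongr; exact real_inner_le_norm _ _
      _ ≤ ⟪g, d⟫ + L * t * ‖d‖ * ‖d‖ := by gcongr; exact hL t (Set.Ico_subset_Icc_self ht)
      _ = ⟪g, d⟫ + L * t * ‖d‖ ^ 2 := by ring
  have := image_le_of_deriv_right_le_deriv_boundary
    (fun t _ => (hφ t).continuousAt.continuousWithinAt) (fun t _ => (hφ t).hasDerivWithinAt)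
    (by simp) (fun t _ => (hB t).continuousAt.continuousWithinAt)
    (fun t _ => (hB t).hasDerivWithinAt) hderiv_le (Set.right_mem_Icc.mpr zero_le_one)
  simpa using this

end Descent

theorem regularized_ratio_lower_bound_general (n : ℕ) (hn : 1 ≤ n)
    (f : EuclideanSpace ℝ (Fin n) → ℝ) (hf : Differentiable ℝ f)
    (x : EuclideanSpace ℝ (Fin n))
    (H : Matrix (Fin n) (Fin n) ℝ) (hH : H.PosDef)
    (d : EuclideanSpace ℝ (Fin n))
    (hd : d = -(Matrix.toEuclideanLin H (gradient f x)))
    (L_g : ℝ)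
    (hlip : ∀ τ ∈ Set.Icc (0 : ℝ) 1,
      ‖gradient f (x + τ • d) - gradient f x‖ ≤ L_g * τ * ‖d‖)
    (η₁ : ℝ) (hη₁' : η₁ < 1)
    (q : ℝ)
    (hq : q = f x + ⟪gradient f x, d⟫
        + (1 / 2) * ⟪d, Matrix.toEuclideanLin H⁻¹ d⟫) :
    f x - f (x + d) - η₁ * (f x - q) ≥
      (1 / 2) * ((2 - η₁) *
          (Finset.univ.inf' ⟨⟨0, hn⟩, Finset.mem_univ _⟩
            fun i : Fin n => (hH.inv.1.eigenvalues i : ℝ)) - L_g) * ‖d‖ ^ 2 := by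
  set m := Finset.univ.inf' ⟨⟨0, hn⟩, Finset.mem_univ _⟩
    fun i : Fin n => (hH.inv.1.eigenvalues i : ℝ)
  set s := ⟪d, Matrix.toEuclideanLin H⁻¹ d⟫ with hs
  have hHd : Matrix.toEuclideanLin H⁻¹ d = -gradient f x := by
    rw [hd, map_neg, Matrix.toEuclideanLin_inv_apply_toEuclideanLin
      ((Matrix.isUnit_iff_isUnit_det H).mp hH.isUnit)]
  have hgd : ⟪gradient f x, d⟫ = -s := by
    rw [hs, hHd, inner_neg_right, neg_neg, real_inner_comm]
  have hray : m * ‖d‖ ^ 2 ≤ s :=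
    hH.inv.1.mul_norm_sq_le_inner_toEuclideanLin (fun i => Finset.inf'_le _ (Finset.mem_univ i)) d
  have hdesc := hf.apply_add_le_of_norm_gradient_sub_le hlip
  calc f x - f (x + d) - η₁ * (f x - q) ≥ (1 - η₁ / 2) * s - L_g / 2 * ‖d‖ ^ 2 := by
        rw [hq, hgd]; linarith
    _ ≥ (1 - η₁ / 2) * (m * ‖d‖ ^ 2) - L_g / 2 * ‖d‖ ^ 2 := by gcongr; linarith
    _ = 1 / 2 * ((2 - η₁) * m - L_g) * ‖d‖ ^ 2 := by ring

/-- **Ratio lemma for the regularized L-BFGS step.** Let `f : ℝⁿ → ℝ` be differentiable,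
`H` symmetric positive definite, `d = −H ∇f(x)`, suppose
`‖∇f(x + τ d) − ∇f(x)‖ ≤ L_g τ ‖d‖` for all `τ ∈ [0,1]`, and let `0 < η₁ < 1` and
`q = f(x) + ∇f(x)ᵀ d + (1/2) dᵀ H⁻¹ d`. Then
`f(x) − f(x + d) − η₁ (f(x) − q) ≥ (1/2)((2 − η₁) λ_min(H⁻¹) − L_g) ‖d‖²`. -/
theorem regularized_ratio_lower_bound (n : ℕ) (hn : 1 ≤ n)
    (f : EuclideanSpace ℝ (Fin n) → ℝ) (hf : Differentiable ℝ f)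
    (x : EuclideanSpace ℝ (Fin n))
    (H : Matrix (Fin n) (Fin n) ℝ) (hH : H.PosDef)
    (d : EuclideanSpace ℝ (Fin n))
    (hd : d = -(Matrix.toEuclideanLin H (gradient f x)))
    (L_g : ℝ) (hLg : 0 < L_g)
    (hlip : ∀ τ ∈ Set.Icc (0 : ℝ) 1,
      ‖gradient f (x + τ • d) - gradient f x‖ ≤ L_g * τ * ‖d‖)
    (η₁ : ℝ) (hη₁ : 0 < η₁) (hη₁' : η₁ < 1)
    (q : ℝ)
    (hq : q = f x + ⟪gradient f x, d⟫
        + (1 / 2) * ⟪d, Matrix.toEuclideanLin H⁻¹ d⟫) :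
    f x - f (x + d) - η₁ * (f x - q) ≥
      (1 / 2) * ((2 - η₁) *
          (Finset.univ.inf' ⟨⟨0, hn⟩, Finset.mem_univ _⟩
            fun i : Fin n => (hH.inv.1.eigenvalues i : ℝ)) - L_g) * ‖d‖ ^ 2 :=
  regularized_ratio_lower_bound_general n hn f hf x H hH d hd L_g hlip η₁ hη₁' q hq
end
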